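/- arXiv:2507.10954 — 2 statements merged into one kernel-verified Lean document; each statement's English description precedes it below -/
import Mathlib

section
/- Let n ≥ 2 and let the (n+1)-tuples p = (p₁,…,p_{n+1}) and q = (q₁,…,q_{n+1}) ∈ ℝ^{n+1} satisfy p ≺ q. Fix 1 ≤ k ≤ n and suppose q₁ ≥ q₂ ≥ … ≥ q_k ≥ p₁ ≥ p₂ ≥ … ≥ p_{n+1} ≥ q_{n+1} and q_{k+1} ≤ p₁. Define n-tuples p* = (p₁*,…,pₙ*) and q* = (q₁*,…,qₙ*) by p_j* = p_{j+1} for all j, q_j* = q_j for j = 1,…,k−1, q_k* = q_k + q_{k+1} − p₁, and q_j* = q_{j+1} for j = k+1,…,n; and define pairs p′ = (p₁, q_k*) if p₁ ≥ q_k* and p′ = (q_k*, p₁) if p₁ < q_k*, and q′ = (q_k, q_{k+1}). Then p* ≺ q* (allowing equality p* = q*) and p′ ≺ q′ (allowing equality p′ = q′); that is, all the majorization inequalities (ordering, partial-sum inequalities, and equality of total sums) hold for these new tuples. -/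
open Finset

/-- `p ≺ q` : `p` is (strictly) majorized by `q`. -/
def Majorizes {n : ℕ} (p q : Fin n → ℝ) : Prop :=
  (∀ i j : Fin n, i ≤ j → p j ≤ p i) ∧
  (∀ i j : Fin n, i ≤ j → q j ≤ q i) ∧
  (∀ k : Fin n, ∑ j ∈ Finset.univ.filter (fun j => j ≤ k), p j ≤
      ∑ j ∈ Finset.univ.filter (fun j => j ≤ k), q j) ∧
  (∑ j, p j = ∑ j, q j) ∧ p ≠ q

/-- Weak majorization: all the majorization inequalities (ordering, partial sums,
equality of total sums), allowing `p = q`. -/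
def MajorizesW {n : ℕ} (p q : Fin n → ℝ) : Prop :=
  (∀ i j : Fin n, i ≤ j → p j ≤ p i) ∧
  (∀ i j : Fin n, i ≤ j → q j ≤ q i) ∧
  (∀ k : Fin n, ∑ j ∈ Finset.univ.filter (fun j => j ≤ k), p j ≤
      ∑ j ∈ Finset.univ.filter (fun j => j ≤ k), q j) ∧
  (∑ j, p j = ∑ j, q j)

/- The tuples are indexed by `Fin (n+1) = {0, 1, ..., n}`, so the paper's `p_j` is `p ⟨j-1⟩`;
in particular the paper's `p₁` is `p 0`, `q_k` is `q ⟨k-1⟩` and `q_{k+1}` is `q ⟨k⟩`. -/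
lemma maj2 (a b c d : ℝ) (hab : b ≤ a) (hcd : d ≤ c) (hac : a ≤ c) (hsum : a + b = c + d) :
    MajorizesW ![a,b] ![c,d] := by
  refine ⟨?_, ?_, ?_, ?_⟩
  · intro i j hij
    fin_cases i <;> fin_cases j <;> simp_all
  · intro i j hij
    fin_cases i <;> fin_cases j <;> simp_all
  · intro m
    fin_cases m <;>
      simp [Finset.sum_filter, Fin.sum_univ_two] <;> linarith
  · simp [Fin.sum_univ_two]; linarith

lemma myAntitone {N : ℕ} (f : Fin N → ℝ)
    (h : ∀ m : ℕ, (hm : m + 1 < N) → f ⟨m+1, hm⟩ ≤ f ⟨m, Nat.lt_of_succ_lt hm⟩) :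
    ∀ i j : Fin N, i ≤ j → f j ≤ f i := by
  intro ⟨i, hi⟩ ⟨j, hj⟩ hij
  simp only [Fin.mk_le_mk] at hij
  induction j with
  | zero => exact le_of_eq (congrArg f (Fin.ext (by simp only [Fin.val_mk]; omega)))
  | succ m ih =>
    rcases Nat.lt_or_ge i (m+1) with h1 | h1
    · exact le_trans (h m hj) (ih (by omega) (by omega))
    · exact le_of_eq (congrArg f (Fin.ext (by simp only [Fin.val_mk]; omega)))

lemma mySumFilter {N : ℕ} (f : Fin N → ℝ) (m : Fin N) :
    ∑ j ∈ univ.filter (fun j => j ≤ m), f j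
      = ∑ i ∈ Finset.range ((m:ℕ)+1), (if h : i < N then f ⟨i,h⟩ else 0) := by
  rw [Finset.sum_filter]
  have h1 : ∑ j : Fin N, (if j ≤ m then f j else 0)
      = ∑ i ∈ Finset.range N, (if h : i < N then (if i ≤ (m:ℕ) then f ⟨i,h⟩ else 0) else 0) := by
    rw [← Fin.sum_univ_eq_sum_range]
    apply Finset.sum_congr rfl
    intro j _
    rw [dif_pos j.isLt]
    simp only [Fin.eta, Fin.le_def]
  rw [h1]
  rw [← Finset.sum_subset (Finset.range_subset_range.2 (by omega : (m:ℕ)+1 ≤ N))]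
  · apply Finset.sum_congr rfl
    intro i hi
    simp only [Finset.mem_range] at hi
    rw [dif_pos (by omega : i < N), if_pos (by omega : i ≤ (m:ℕ)), dif_pos]
  · intro i hiN hi
    simp only [Finset.mem_range] at hiN
    simp only [Finset.mem_range, not_lt] at hi
    rw [dif_pos hiN, if_neg (by omega)]


theorem stmt2 (n k : ℕ) (hn : 2 ≤ n) (hk1 : 1 ≤ k) (hkn : k ≤ n)
    (p q : Fin (n + 1) → ℝ) (hmaj : Majorizes p q)
    (hqkp1 : p 0 ≤ q ⟨k - 1, by omega⟩)
    (hpq : q ⟨n, by omega⟩ ≤ p ⟨n, by omega⟩)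
    (hqk1p1 : q ⟨k, by omega⟩ ≤ p 0)
    (pstar qstar : Fin n → ℝ)
    (hpstar : ∀ j : Fin n, pstar j = p j.succ)
    (hqstar1 : ∀ j : Fin n, (j : ℕ) < k - 1 → qstar j = q (Fin.castSucc j))
    (hqstar2 : qstar ⟨k - 1, by omega⟩ = q ⟨k - 1, by omega⟩ + q ⟨k, by omega⟩ - p 0)
    (hqstar3 : ∀ j : Fin n, k ≤ (j : ℕ) → qstar j = q j.succ)
    (p' q' : Fin 2 → ℝ)
    (hp'ge : qstar ⟨k - 1, by omega⟩ ≤ p 0 → p' = ![p 0, qstar ⟨k - 1, by omega⟩])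
    (hp'lt : p 0 < qstar ⟨k - 1, by omega⟩ → p' = ![qstar ⟨k - 1, by omega⟩, p 0])
    (hq' : q' = ![q ⟨k - 1, by omega⟩, q ⟨k, by omega⟩]) :
    MajorizesW pstar qstar ∧ MajorizesW p' q' := by
  obtain ⟨K, rfl⟩ : ∃ K, k = K + 1 := ⟨k - 1, by omega⟩
  simp only [Nat.add_sub_cancel] at hqkp1 hqstar1 hqstar2 hp'ge hp'lt hq'
  obtain ⟨hpmono, hqmono, hpart, htotal, -⟩ := hmaj
  have hKn : K < n := by omega
  -- ℕ-indexed versions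
  set P : ℕ → ℝ := fun i => if h : i < n+1 then p ⟨i,h⟩ else 0 with hPdef
  set Q : ℕ → ℝ := fun i => if h : i < n+1 then q ⟨i,h⟩ else 0 with hQdef
  set Pst : ℕ → ℝ := fun i => if h : i < n then pstar ⟨i,h⟩ else 0 with hPstdef
  set Qst : ℕ → ℝ := fun i => if h : i < n then qstar ⟨i,h⟩ else 0 with hQstdef
  have hPval : ∀ i (h : i < n+1), P i = p ⟨i, h⟩ := fun i h => dif_pos h
  have hQval : ∀ i (h : i < n+1), Q i = q ⟨i, h⟩ := fun i h => dif_pos h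
  have hP0 : P 0 = p 0 := by
    rw [hPval 0 (by omega)]; exact congrArg p (Fin.ext (by simp))
  -- q is monotone on ℕ indices
  have hqm : ∀ a b : ℕ, a ≤ b → b < n + 1 → Q b ≤ Q a := by
    intro a b hab hb
    rw [hQval a (by omega), hQval b hb]
    exact hqmono ⟨a, by omega⟩ ⟨b, hb⟩ (by simp [Fin.mk_le_mk]; omega)
  have hpm : ∀ a b : ℕ, a ≤ b → b < n + 1 → P b ≤ P a := by
    intro a b hab hb
    rw [hPval a (by omega), hPval b hb]
    exact hpmono ⟨a, by omega⟩ ⟨b, hb⟩ (by simp [Fin.mk_le_mk]; omega)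
  -- value lemmas
  have hPst : ∀ i, i < n → Pst i = P (i+1) := by
    intro i h
    show (if h : i < n then pstar ⟨i,h⟩ else 0) = _
    rw [dif_pos h, hpstar, hPval (i+1) (by omega)]
    congr 1
  have hQst1 : ∀ i, i < K → Qst i = Q i := by
    intro i h
    show (if h' : i < n then qstar ⟨i,h'⟩ else 0) = _
    rw [dif_pos (by omega : i < n), hqstar1 ⟨i, by omega⟩ (by simpa using h),
      hQval i (by omega)]
    congr 1
  have hQst2 : Qst K = Q K + Q (K+1) - P 0 := by
    show (if h' : K < n then qstar ⟨K,h'⟩ else 0) = _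
    rw [dif_pos hKn, hQval K (by omega), hQval (K+1) (by omega), hP0]
    exact hqstar2
  have hQst3 : ∀ i, K < i → i < n → Qst i = Q (i+1) := by
    intro i h hi
    show (if h' : i < n then qstar ⟨i,h'⟩ else 0) = _
    rw [dif_pos hi, hqstar3 ⟨i, hi⟩ (by simpa using h), hQval (i+1) (by omega)]
    congr 1
  -- partial sums of p, q
  have hsum : ∀ m : ℕ, m < n+1 → ∑ i ∈ range (m+1), P i ≤ ∑ i ∈ range (m+1), Q i := by
    intro m hm
    have := hpart ⟨m, hm⟩
    rw [mySumFilter, mySumFilter] at this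
    exact this
  have hconv : ∀ (N : ℕ) (f : Fin N → ℝ),
      ∑ j, f j = ∑ i ∈ range N, (if h : i < N then f ⟨i,h⟩ else 0) := by
    intro N f
    rw [← Fin.sum_univ_eq_sum_range]
    exact Finset.sum_congr rfl fun j _ => by rw [dif_pos j.isLt]
  have htot : ∑ i ∈ range (n+1), P i = ∑ i ∈ range (n+1), Q i := by
    have := htotal
    rwa [hconv (n+1) p, hconv (n+1) q] at this
  -- sum identities for pstar, qstar
  have hA : ∀ m, m < n → ∑ i ∈ range (m+1), Pst i + P 0 = ∑ i ∈ range (m+2), P i := by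
    intro m hm
    rw [Finset.sum_range_succ' P (m+1)]
    congr 1
    apply Finset.sum_congr rfl
    intro i hi
    simp only [Finset.mem_range] at hi
    exact hPst i (by omega)
  have hQsmall : ∀ m, m + 1 ≤ K → ∑ i ∈ range (m+1), Qst i = ∑ i ∈ range (m+1), Q i := by
    intro m hm
    apply Finset.sum_congr rfl
    intro i hi
    simp only [Finset.mem_range] at hi
    exact hQst1 i (by omega)
  have hQbig : ∀ m, K ≤ m → m < n → ∑ i ∈ range (m+1), Qst i + P 0 = ∑ i ∈ range (m+2), Q i := by
    intro m hKm
    induction m, hKm using Nat.le_induction with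
    | base =>
      intro _
      rw [Finset.sum_range_succ, Finset.sum_range_succ Q (K+1), Finset.sum_range_succ Q K]
      have e : ∑ i ∈ range K, Qst i = ∑ i ∈ range K, Q i :=
        Finset.sum_congr rfl fun i hi => hQst1 i (Finset.mem_range.1 hi)
      rw [e, hQst2]; ring
    | succ m hKm ih =>
      intro hm
      rw [Finset.sum_range_succ, Finset.sum_range_succ Q (m+2)]
      rw [hQst3 (m+1) (by omega) (by omega)]
      have := ih (by omega)
      linarith
  have hQK1P0 : Q (K+1) ≤ P 0 := by
    rw [hQval (K+1) (by omega), hP0]; exact hqk1p1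
  have hP0QK : P 0 ≤ Q K := by
    rw [hQval K (by omega), hP0]; exact hqkp1
  constructor
  · refine ⟨?_, ?_, ?_, ?_⟩
    · intro i j hij
      rw [hpstar, hpstar]
      exact hpmono _ _ (Fin.succ_le_succ_iff.mpr hij)
    · apply myAntitone
      intro m hm
      have e1 : qstar ⟨m+1, hm⟩ = Qst (m+1) := by
        simp only [hQstdef]; rw [dif_pos hm]
      have e2 : qstar ⟨m, Nat.lt_of_succ_lt hm⟩ = Qst m := by
        simp only [hQstdef]; rw [dif_pos (Nat.lt_of_succ_lt hm)]
      rw [e1, e2]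
      by_cases h1 : m + 1 < K
      · rw [hQst1 _ h1, hQst1 _ (by omega)]
        exact hqm m (m+1) (by omega) (by omega)
      · by_cases h2 : m + 1 = K
        · rw [h2, hQst2, hQst1 m (by omega)]
          have := hqm m K (by omega) (by omega)
          linarith
        · by_cases h3 : m = K
          · subst h3
            rw [hQst3 (m+1) (by omega) (by omega), hQst2]
            have := hqm (m+1) (m+2) (by omega) (by omega)
            linarith
          · rw [hQst3 (m+1) (by omega) (by omega), hQst3 m (by omega) (by omega)]
            exact hqm (m+1) (m+2) (by omega) (by omega)
    · intro mf
      obtain ⟨m, hm⟩ := mf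
      rw [mySumFilter, mySumFilter]
      show ∑ i ∈ range (m+1), Pst i ≤ ∑ i ∈ range (m+1), Qst i
      by_cases hc : m + 1 ≤ K
      · rw [hQsmall m hc]
        apply Finset.sum_le_sum
        intro i hi
        simp only [Finset.mem_range] at hi
        rw [hPst i (by omega)]
        calc P (i+1) ≤ P 0 := hpm 0 (i+1) (by omega) (by omega)
          _ ≤ Q K := hP0QK
          _ ≤ Q i := hqm i K (by omega) (by omega)
      · have h1 := hA m hm
        have h2 := hQbig m (by omega) hm
        have h3 := hsum (m+1) (by omega)
        linarith
    · rw [hconv n pstar, hconv n qstar]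
      show ∑ i ∈ range n, Pst i = ∑ i ∈ range n, Qst i
      have h1 := hA (n-1) (by omega)
      have h2 := hQbig (n-1) (by omega) (by omega)
      rw [show n-1+1 = n from by omega, show n-1+2 = n+1 from by omega] at h1 h2
      linarith
  · by_cases hc : qstar ⟨K, by omega⟩ ≤ p 0
    · rw [hp'ge hc, hq']
      apply maj2
      · exact hc
      · exact hqmono ⟨K, by omega⟩ ⟨K+1, by omega⟩ (Fin.mk_le_mk.mpr (by omega))
      · exact hqkp1
      · rw [hqstar2]; ring
    · push_neg at hc
      rw [hp'lt hc, hq']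
      apply maj2
      · exact le_of_lt hc
      · exact hqmono ⟨K, by omega⟩ ⟨K+1, by omega⟩ (Fin.mk_le_mk.mpr (by omega))
      · rw [hqstar2]; linarith [hqk1p1]
      · rw [hqstar2]; ring
end

section
/- For all real p > 1 and r > 0, the double inequality ((p − 1)/(p + r − 1)) · (2^p − 1) 2^r / (2^{p+r} − 1) < ζ(p + r)/ζ(p) < (2^p − 1) 2^r / (2^{p+r} − 1) holds, where ζ is the Riemann zeta function. -/
/-!
With `λ(s) = ∑ (2k+1)^{-s} = (1 - 2^{-s}) ζ(s)`, the ratio `ζ(p+r)/ζ(p)` is `λ(p+r)/λ(p)` times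
`(1 - 2^{-p})/(1 - 2^{-(p+r)}) = (2^p - 1) 2^r/(2^{p+r} - 1)`. The upper bound is then
`λ(p+r) < λ(p)`, and the lower bound is `(p-1) λ(p) < (p+r-1) λ(p+r)`: the function `(s-1) λ(s)`
is increasing because `(s-1)(-λ'(s)) < λ(s)`, which follows by comparing the tails of `λ` and `-λ'`
from `3` on with `½∫₃^∞ t^{-s} dt` and `½∫₃^∞ log t · t^{-s} dt`, computed via antiderivatives.
-/

open Real

/-- The Riemann zeta function `ζ(s) = ∑_{k=1}^∞ k^{-s}` for real `s`. -/
noncomputable def rzeta (s : ℝ) : ℝ :=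
  ∑' k : ℕ, ((k : ℝ) + 1) ^ (-s)

open Set Filter Topology

section Telescoping

variable {u G : ℕ → ℝ}

lemma sum_range_le_of_le_sub_succ (hG : ∀ k, 0 ≤ G k) (h : ∀ k, u k ≤ G k - G (k + 1))
    (n : ℕ) : ∑ k ∈ Finset.range n, u k ≤ G 0 :=
  calc ∑ k ∈ Finset.range n, u k ≤ ∑ k ∈ Finset.range n, (G k - G (k + 1)) :=
        Finset.sum_le_sum fun k _ => h k
    _ = G 0 - G n := Finset.sum_range_sub' G n
    _ ≤ G 0 := sub_le_self _ (hG n)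

lemma le_tsum_of_sub_succ_le (hu : Summable u) (hG : Tendsto G atTop (𝓝 0))
    (h : ∀ k, G k - G (k + 1) ≤ u k) : G 0 ≤ ∑' k, u k := by
  have hlim : Tendsto (fun n => G 0 - G n) atTop (𝓝 (G 0)) := by
    simpa using tendsto_const_nhds.sub hG
  refine le_of_tendsto_of_tendsto' hlim hu.hasSum.tendsto_sum_nat fun n => ?_
  rw [← Finset.sum_range_sub']
  exact Finset.sum_le_sum fun k _ => h k

end Telescoping

section StepComparison

variable {f F : ℝ → ℝ} {a h : ℝ}

lemma mul_le_sub_le_mul_of_hasDerivAt_neg {x : ℝ} (hh : 0 < h)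
    (hf : AntitoneOn f (Icc x (x + h))) (hF : ∀ y ∈ Icc x (x + h), HasDerivAt F (-f y) y) :
    h * f (x + h) ≤ F x - F (x + h) ∧ F x - F (x + h) ≤ h * f x := by
  have hx : x < x + h := lt_add_of_pos_right x hh
  obtain ⟨c, hc, hslope⟩ := exists_hasDerivAt_eq_slope F (fun y => -f y) hx
    (fun y hy => (hF y hy).continuousAt.continuousWithinAt)
    (fun y hy => hF y (Ioo_subset_Icc_self hy))
  have hFc : F x - F (x + h) = h * f c := by
    rw [add_sub_cancel_left, eq_div_iff hh.ne'] at hslope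
    linarith
  have hcx : c ∈ Icc x (x + h) := Ioo_subset_Icc_self hc
  rw [hFc]
  exact ⟨mul_le_mul_of_nonneg_left (hf hcx (right_mem_Icc.2 hx.le) hc.2.le) hh.le,
    mul_le_mul_of_nonneg_left (hf (left_mem_Icc.2 hx.le) hcx hc.1.le) hh.le⟩

variable (hh : 0 < h) (hf : AntitoneOn f (Ici a)) (hF : ∀ x ∈ Ici a, HasDerivAt F (-f x) x)
include hh hf hF

lemma mul_le_sub_le_mul_of_hasDerivAt_neg_nat (k : ℕ) :
    h * f (a + h * (k + 1)) ≤ F (a + h * k) - F (a + h * (k + 1)) ∧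
      F (a + h * k) - F (a + h * (k + 1)) ≤ h * f (a + h * k) := by
  have hk : a ≤ a + h * k := le_add_of_nonneg_right (by positivity)
  rw [mul_add_one, ← add_assoc]
  exact mul_le_sub_le_mul_of_hasDerivAt_neg hh
    (hf.mono fun y hy => hk.trans hy.1) fun y hy => hF y (hk.trans hy.1)

lemma summable_and_mul_tsum_le_of_hasDerivAt_neg (hf0 : ∀ x ∈ Ici a, 0 ≤ f x)
    (hF0 : ∀ x ∈ Ici a, 0 ≤ F x) :
    Summable (fun k : ℕ => f (a + h * (k + 1))) ∧ h * ∑' k : ℕ, f (a + h * (k + 1)) ≤ F a := by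
  have hmem {x : ℝ} (hx : 0 ≤ x) : a + h * x ∈ Ici a :=
    le_add_of_nonneg_right (mul_nonneg hh.le hx)
  have hu0 (k : ℕ) : 0 ≤ h * f (a + h * (k + 1)) := mul_nonneg hh.le (hf0 _ (hmem (by positivity)))
  have hsum := sum_range_le_of_le_sub_succ (u := fun k : ℕ => h * f (a + h * (k + 1)))
    (G := fun k : ℕ => F (a + h * k)) (fun k => hF0 _ (hmem k.cast_nonneg))
    (fun k => by exact_mod_cast (mul_le_sub_le_mul_of_hasDerivAt_neg_nat hh hf hF k).1)
  simp only [CharP.cast_eq_zero, mul_zero, add_zero] at hsum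
  refine ⟨(summable_mul_left_iff hh.ne').1 (summable_of_sum_range_le hu0 hsum), ?_⟩
  rw [← tsum_mul_left]
  exact Real.tsum_le_of_sum_range_le hu0 hsum

lemma le_mul_tsum_of_hasDerivAt_neg (hsum : Summable fun k : ℕ => f (a + h * k))
    (hF0 : Tendsto F atTop (𝓝 0)) : F a ≤ h * ∑' k : ℕ, f (a + h * k) := by
  have hG : Tendsto (fun k : ℕ => F (a + h * k)) atTop (𝓝 0) :=
    hF0.comp (tendsto_atTop_add_const_left _ _
      (tendsto_natCast_atTop_atTop.const_mul_atTop hh))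
  have := le_tsum_of_sub_succ_le (hsum.mul_left h) hG
    (fun k => by exact_mod_cast (mul_le_sub_le_mul_of_hasDerivAt_neg_nat hh hf hF k).2)
  simpa [tsum_mul_left] using this

end StepComparison

section Antiderivatives

variable {s : ℝ}

lemma hasDerivAt_rpow_one_sub_div (hs : s ≠ 1) {t : ℝ} (ht : 0 < t) :
    HasDerivAt (fun t : ℝ => t ^ (1 - s) / (s - 1)) (-t ^ (-s)) t := by
  refine ((hasDerivAt_rpow_const (p := 1 - s) (Or.inl ht.ne')).div_const (s - 1)).congr_deriv ?_
  rw [sub_sub_cancel_left, ← neg_sub s 1, neg_mul, neg_div,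
    mul_div_cancel_left₀ _ (sub_ne_zero.2 hs)]

lemma hasDerivAt_rpow_one_sub_mul_log (hs : s ≠ 1) {t : ℝ} (ht : 0 < t) :
    HasDerivAt (fun t : ℝ => t ^ (1 - s) * (log t / (s - 1) + 1 / (s - 1) ^ 2))
      (-(log t * t ^ (-s))) t := by
  have hpow := hasDerivAt_rpow_const (p := 1 - s) (Or.inl ht.ne')
  refine (hpow.mul (((hasDerivAt_log ht.ne').div_const (s - 1)).add_const
    (1 / (s - 1) ^ 2))).congr_deriv ?_
  have hs' : s - 1 ≠ 0 := sub_ne_zero.2 hs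
  have hpow' : t ^ (1 - s) = t ^ (-s) * t := by rw [← rpow_add_one ht.ne', neg_add_eq_sub]
  rw [sub_sub_cancel_left, hpow']
  field_simp
  ring

lemma tendsto_rpow_one_sub_div_atTop (hs : 1 < s) :
    Tendsto (fun t : ℝ => t ^ (1 - s) / (s - 1)) atTop (𝓝 0) := by
  simpa [neg_sub] using (tendsto_rpow_neg_atTop (sub_pos.2 hs)).div_const (s - 1)

lemma antitoneOn_log_mul_rpow_neg (hs : 1 < s) :
    AntitoneOn (fun t : ℝ => log t * t ^ (-s)) (Ici 3) := by
  have hexp : exp s⁻¹ ≤ 3 := by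
    have := exp_one_lt_d9
    have : exp s⁻¹ ≤ exp 1 := exp_le_exp.2 (inv_le_one_of_one_le₀ hs.le)
    linarith
  refine ((log_div_self_rpow_antitoneOn (by linarith)).mono (Ici_subset_Ici.2 hexp)).congr ?_
  intro t ht
  simp only [rpow_neg (by linarith [mem_Ici.1 ht] : (0 : ℝ) ≤ t), div_eq_mul_inv]

end Antiderivatives

noncomputable def dirichletLambda (s : ℝ) : ℝ :=
  ∑' k : ℕ, (2 * (k : ℝ) + 1) ^ (-s)

noncomputable def dirichletLambdaLog (s : ℝ) : ℝ :=
  ∑' k : ℕ, log (2 * (k : ℝ) + 1) * (2 * (k : ℝ) + 1) ^ (-s)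

section DirichletLambda

variable {s : ℝ}

lemma summable_rzeta (hs : 1 < s) : Summable fun k : ℕ => ((k : ℝ) + 1) ^ (-s) := by
  refine ((summable_one_div_nat_add_rpow 1 s).2 hs).congr fun k => ?_
  rw [abs_of_pos (by positivity), one_div, rpow_neg (by positivity)]

lemma summable_dirichletLambda (hs : 1 < s) :
    Summable fun k : ℕ => (2 * (k : ℝ) + 1) ^ (-s) :=
  (summable_rzeta hs).of_nonneg_of_le (fun k => by positivity) fun k =>
    rpow_le_rpow_of_nonpos (by positivity) (by linarith [k.cast_nonneg (α := ℝ)]) (by linarith)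

lemma one_sub_two_rpow_neg_pos (hs : 0 < s) : 0 < 1 - (2 : ℝ) ^ (-s) :=
  sub_pos.2 (rpow_lt_one_of_one_lt_of_neg one_lt_two (neg_neg_of_pos hs))

lemma dirichletLambda_eq (hs : 1 < s) : dirichletLambda s = (1 - 2 ^ (-s)) * rzeta s := by
  set z : ℕ → ℝ := fun k => ((k : ℝ) + 1) ^ (-s)
  have heven : (fun k : ℕ => z (2 * k)) = fun k : ℕ => (2 * (k : ℝ) + 1) ^ (-s) := by
    ext k; simp [z]
  have hodd : (fun k : ℕ => z (2 * k + 1)) = fun k => 2 ^ (-s) * z k := by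
    ext k
    simp only [z]
    rw [← mul_rpow zero_le_two (by positivity)]
    push_cast
    ring_nf
  have hsplit := tsum_even_add_odd (f := z) (heven ▸ summable_dirichletLambda hs)
    (hodd ▸ (summable_rzeta hs).mul_left _)
  rw [heven, hodd, tsum_mul_left] at hsplit
  rw [dirichletLambda, show rzeta s = ∑' k, z k from rfl]
  linear_combination hsplit

lemma rzeta_eq_div (hs : 1 < s) : rzeta s = dirichletLambda s / (1 - 2 ^ (-s)) := by
  rw [dirichletLambda_eq hs, mul_div_cancel_left₀ _ (one_sub_two_rpow_neg_pos (by linarith)).ne']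

lemma one_add_le_dirichletLambda (hs : 1 < s) :
    1 + 3 ^ (1 - s) / (s - 1) / 2 ≤ dirichletLambda s := by
  have hsum := summable_dirichletLambda hs
  have hshift (k : ℕ) : (2 * ((k + 1 : ℕ) : ℝ) + 1) = 3 + 2 * k := by push_cast; ring
  have htail := le_mul_tsum_of_hasDerivAt_neg (a := 3) two_pos (f := fun t => t ^ (-s))
    (fun x hx y _ hxy => rpow_le_rpow_of_nonpos (by linarith [mem_Ici.1 hx]) hxy (by linarith))
    (fun x hx => hasDerivAt_rpow_one_sub_div hs.ne' (by linarith [mem_Ici.1 hx]))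
    (((summable_nat_add_iff 1).2 hsum).congr fun k => by rw [hshift])
    (tendsto_rpow_one_sub_div_atTop hs)
  rw [dirichletLambda, hsum.tsum_eq_zero_add]
  simp only [hshift, CharP.cast_eq_zero, mul_zero, zero_add, one_rpow] at htail ⊢
  linarith

lemma dirichletLambda_pos (hs : 1 < s) : 0 < dirichletLambda s := by
  have : 0 < (3 : ℝ) ^ (1 - s) / (s - 1) / 2 := by
    have := sub_pos.2 hs
    positivity
  linarith [one_add_le_dirichletLambda hs]

lemma two_mul_add_two_add_one (k : ℕ) : 2 * ((k + 2 : ℕ) : ℝ) + 1 = 3 + 2 * (k + 1) := by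
  push_cast; ring

lemma summable_and_tsum_log_mul_rpow_tail_le (hs : 1 < s) :
    Summable (fun k : ℕ => log (3 + 2 * (k + 1)) * (3 + 2 * ((k : ℝ) + 1)) ^ (-s)) ∧
    2 * ∑' k : ℕ, log (3 + 2 * (k + 1)) * (3 + 2 * ((k : ℝ) + 1)) ^ (-s) ≤
      3 ^ (1 - s) * (log 3 / (s - 1) + 1 / (s - 1) ^ 2) := by
  refine summable_and_mul_tsum_le_of_hasDerivAt_neg (f := fun t => log t * t ^ (-s))
    (F := fun t => t ^ (1 - s) * (log t / (s - 1) + 1 / (s - 1) ^ 2)) two_pos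
    (antitoneOn_log_mul_rpow_neg hs)
    (fun x hx => hasDerivAt_rpow_one_sub_mul_log hs.ne' (by linarith [mem_Ici.1 hx]))
    (fun x hx => ?_) (fun x hx => ?_)
  all_goals
    have hx0 : 0 ≤ x := by linarith [mem_Ici.1 hx]
    have hlog := log_nonneg (by linarith [mem_Ici.1 hx] : (1 : ℝ) ≤ x)
  · exact mul_nonneg hlog (rpow_nonneg hx0 _)
  · exact mul_nonneg (rpow_nonneg hx0 _)
      (add_nonneg (div_nonneg hlog (by linarith)) (by positivity))

lemma summable_dirichletLambdaLog (hs : 1 < s) :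
    Summable fun k : ℕ => log (2 * (k : ℝ) + 1) * (2 * (k : ℝ) + 1) ^ (-s) :=
  (summable_nat_add_iff 2).1 ((summable_and_tsum_log_mul_rpow_tail_le hs).1.congr fun k => by
    rw [two_mul_add_two_add_one])

lemma dirichletLambdaLog_le (hs : 1 < s) :
    dirichletLambdaLog s ≤
      log 3 * 3 ^ (-s) + 3 ^ (1 - s) * (log 3 / (s - 1) + 1 / (s - 1) ^ 2) / 2 := by
  rw [dirichletLambdaLog, ← (summable_dirichletLambdaLog hs).sum_add_tsum_nat_add 2]
  simp only [two_mul_add_two_add_one, Finset.sum_range_succ, Finset.sum_range_zero]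
  rw [show (2 : ℝ) * ((1 : ℕ) : ℝ) + 1 = 3 by norm_num]
  simp only [Nat.cast_zero, mul_zero, zero_add, log_one, zero_mul]
  linarith [(summable_and_tsum_log_mul_rpow_tail_le hs).2]

lemma hasDerivAt_dirichletLambda (hs : 1 < s) :
    HasDerivAt dirichletLambda (-dirichletLambdaLog s) s := by
  set σ := (1 + s) / 2 with hσ_def
  have hσ : 1 < σ := by linarith
  have hsσ : s ∈ Ioi σ := mem_Ioi.2 (by linarith)
  have hderiv (k : ℕ) (y : ℝ) : HasDerivAt (fun y => (2 * (k : ℝ) + 1) ^ (-y))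
      (-(log (2 * (k : ℝ) + 1) * (2 * (k : ℝ) + 1) ^ (-y))) y :=
    ((hasStrictDerivAt_const_rpow (by positivity) (-y)).hasDerivAt.comp y
      (hasDerivAt_neg y)).congr_deriv (by ring)
  have hbound (k : ℕ) (y : ℝ) (hy : y ∈ Ioi σ) :
      ‖-(log (2 * (k : ℝ) + 1) * (2 * (k : ℝ) + 1) ^ (-y))‖ ≤
        log (2 * (k : ℝ) + 1) * (2 * (k : ℝ) + 1) ^ (-σ) := by
    have hk : 1 ≤ 2 * (k : ℝ) + 1 := by linarith [k.cast_nonneg (α := ℝ)]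
    rw [norm_neg, norm_of_nonneg (mul_nonneg (log_nonneg hk) (by positivity))]
    exact mul_le_mul_of_nonneg_left
      (rpow_le_rpow_of_exponent_le hk (by linarith [mem_Ioi.1 hy])) (log_nonneg hk)
  have := hasDerivAt_tsum_of_isPreconnected (summable_dirichletLambdaLog hσ) isOpen_Ioi
    isPreconnected_Ioi (fun k y _ => hderiv k y) hbound hsσ (summable_dirichletLambda hs) hsσ
  rwa [tsum_neg] at this

end DirichletLambda

lemma sub_one_mul_dirichletLambdaLog_lt {s : ℝ} (hs : 1 < s) :
    (s - 1) * dirichletLambdaLog s < dirichletLambda s := by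
  have hs1 : 0 < s - 1 := sub_pos.2 hs
  set A : ℝ := 3 ^ (1 - s) with hA_def
  have hA : 0 < A := by positivity
  have h3s : (3 : ℝ) ^ (-s) = A / 3 := by
    rw [hA_def, ← neg_add_eq_sub, rpow_add_one (by norm_num), mul_div_cancel_right₀ _ three_ne_zero]
  -- `1 + x ≤ exp x` at `x = (s - 1) log 3`, where `A = exp (-x)`
  have hA_le : A * (1 + (s - 1) * log 3) ≤ 1 := by
    have hexp : A * exp ((s - 1) * log 3) = 1 := by
      rw [hA_def, rpow_def_of_pos three_pos, ← exp_add]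
      ring_nf
      exact exp_zero
    calc A * (1 + (s - 1) * log 3) ≤ A * exp ((s - 1) * log 3) := by
          gcongr; linarith [add_one_le_exp ((s - 1) * log 3)]
      _ = 1 := hexp
  have hlog3 : 0 < log 3 := log_pos (by norm_num)
  have hmain : (s - 1) * log 3 * A / 3 + A * log 3 / 2 < 1 := by
    nlinarith [mul_pos (mul_pos hs1 hlog3) hA, log_three_lt_d9]
  calc (s - 1) * dirichletLambdaLog s
      ≤ (s - 1) * (log 3 * (A / 3) + A * (log 3 / (s - 1) + 1 / (s - 1) ^ 2) / 2) := by
        rw [← h3s]; exact mul_le_mul_of_nonneg_left (dirichletLambdaLog_le hs) hs1.le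
    _ = (s - 1) * log 3 * A / 3 + A * log 3 / 2 + A / (s - 1) / 2 := by
        field_simp
        ring
    _ < 1 + A / (s - 1) / 2 := by linarith
    _ ≤ dirichletLambda s := one_add_le_dirichletLambda hs

lemma strictMonoOn_sub_one_mul_dirichletLambda :
    StrictMonoOn (fun s => (s - 1) * dirichletLambda s) (Ioi 1) := by
  have hderiv (s : ℝ) (hs : s ∈ Ioi (1 : ℝ)) : HasDerivAt (fun s => (s - 1) * dirichletLambda s)
      (1 * dirichletLambda s + (s - 1) * -dirichletLambdaLog s) s :=
    ((hasDerivAt_id s).sub_const 1).mul (hasDerivAt_dirichletLambda hs)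
  refine strictMonoOn_of_deriv_pos (convex_Ioi 1)
    (fun s hs => (hderiv s hs).continuousAt.continuousWithinAt) fun s hs => ?_
  rw [interior_Ioi] at hs
  rw [(hderiv s hs).deriv]
  linarith [sub_one_mul_dirichletLambdaLog_lt hs]

lemma dirichletLambda_lt_of_lt {p q : ℝ} (hp : 1 < p) (hpq : p < q) :
    dirichletLambda q < dirichletLambda p := by
  refine Summable.tsum_lt_tsum (i := 1) (fun k => ?_) ?_
    (summable_dirichletLambda (hp.trans hpq)) (summable_dirichletLambda hp)
  · exact rpow_le_rpow_of_exponent_le (by linarith [k.cast_nonneg (α := ℝ)]) (by linarith)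
  · rw [show 2 * ((1 : ℕ) : ℝ) + 1 = 3 by norm_num]
    exact rpow_lt_rpow_of_exponent_lt (by norm_num) (neg_lt_neg hpq)

lemma two_rpow_ratio_eq (p r : ℝ) :
    ((2 : ℝ) ^ p - 1) * (2 : ℝ) ^ r / ((2 : ℝ) ^ (p + r) - 1) =
      (1 - 2 ^ (-p)) / (1 - 2 ^ (-(p + r))) := by
  rw [rpow_neg zero_le_two, rpow_neg zero_le_two, rpow_add two_pos]
  field_simp

theorem stmt8 (p r : ℝ) (hp : 1 < p) (hr : 0 < r) :
    (p - 1) / (p + r - 1) * (((2 : ℝ) ^ p - 1) * (2 : ℝ) ^ r / ((2 : ℝ) ^ (p + r) - 1)) <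
      rzeta (p + r) / rzeta p ∧
    rzeta (p + r) / rzeta p <
      ((2 : ℝ) ^ p - 1) * (2 : ℝ) ^ r / ((2 : ℝ) ^ (p + r) - 1) := by
  have hq : 1 < p + r := by linarith
  have hcp := one_sub_two_rpow_neg_pos (by linarith : 0 < p)
  have hcq := one_sub_two_rpow_neg_pos (by linarith : 0 < p + r)
  have hlamp := dirichletLambda_pos hp
  have hratio : rzeta (p + r) / rzeta p = dirichletLambda (p + r) / dirichletLambda p *
      ((1 - 2 ^ (-p)) / (1 - 2 ^ (-(p + r)))) := by
    rw [rzeta_eq_div hp, rzeta_eq_div hq]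
    field_simp
  rw [hratio, two_rpow_ratio_eq]
  constructor
  · refine mul_lt_mul_of_pos_right ?_ (div_pos hcp hcq)
    have hmono := strictMonoOn_sub_one_mul_dirichletLambda (mem_Ioi.2 hp) (mem_Ioi.2 hq)
      (lt_add_of_pos_right p hr)
    dsimp only at hmono
    rw [div_lt_div_iff₀ (by linarith) hlamp]
    linarith
  · exact mul_lt_of_lt_one_left (div_pos hcp hcq)
      ((div_lt_one hlamp).2 (dirichletLambda_lt_of_lt hp (lt_add_of_pos_right p hr)))
end
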